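/- Let G be a finite group, g ∈ G, and suppose g^x = g^l for some x ∈ G and integer l with gcd(l, |g|) = 1. Let 𝒩 be a subnormal series from ⟨g⟩ to G and t, k positive integers with l^t ≡ 1 (mod |g|) and gcd(k,|g|)=1. Then c_𝒩(u_l,t(g^k))^i = c_𝒩(u_{l^i},t(g^k)) for every positive integer i, and in particular c_𝒩(u_l,t(g^k)) has finite order (its t-th power is 1). -/

import Mathlib

/-- Conjugation `a^h = h⁻¹ a h` of group-ring elements by group elements. -/
noncomputable def conjBy {G : Type*} [Group G] (h : G) (a : MonoidAlgebra ℤ G) :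
    MonoidAlgebra ℤ G :=
  MonoidAlgebra.of ℤ G h⁻¹ * a * MonoidAlgebra.of ℤ G h

/-- A subnormal series `⟨g⟩ = N₀ ⊴ N₁ ⊴ ⋯ ⊴ N_len = G`. -/
structure SubnormalSeries (G : Type*) [Group G] (g : G) where
  len : ℕ
  N : ℕ → Subgroup G
  bot_eq : N 0 = Subgroup.zpowers g
  top_eq : N len = ⊤
  le_succ : ∀ i, N i ≤ N (i + 1)
  conj_mem : ∀ i, ∀ x ∈ N (i + 1), ∀ y ∈ N i, x⁻¹ * y * x ∈ N i

/-- A choice, for each `i`, of a (right) transversal `T i` of `N i` in `N (i+1)`,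
recorded as a duplicate-free list. -/
structure TransversalSystem {G : Type*} [Group G] {g : G}
    (S : SubnormalSeries G g) where
  T : ℕ → List G
  nodup : ∀ i, (T i).Nodup
  mem : ∀ i, ∀ t ∈ T i, t ∈ S.N (i + 1)
  rep : ∀ i, ∀ y ∈ S.N (i + 1), ∃! t, t ∈ T i ∧ y * t⁻¹ ∈ S.N i

/-- The construction `c⁰(u) = u`, `cⁱ(u) = ∏_{h ∈ T i} (cⁱ⁻¹(u))^h`. -/
noncomputable def cSeq {G : Type*} [Group G] {g : G} (S : SubnormalSeries G g)
    (TS : TransversalSystem S) (u : MonoidAlgebra ℤ G) : ℕ → MonoidAlgebra ℤ G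
  | 0 => u
  | i + 1 => ((TS.T i).map fun h => conjBy h (cSeq S TS u i)).prod

/-- The Bass unit `u_{k,m}(g)` in the integral group ring `ℤG`, with `n = |g|`. -/
noncomputable def bassElem {G : Type*} [Group G] (g : G) (k m : ℕ) :
    MonoidAlgebra ℤ G :=
  (∑ i ∈ Finset.range k, MonoidAlgebra.of ℤ G (g ^ i)) ^ m +
    ((1 - (k : ℤ) ^ m) / (orderOf g : ℤ)) •
      ∑ i ∈ Finset.range (orderOf g), MonoidAlgebra.of ℤ G (g ^ i)

/-!
For `h = g ^ k` we have `h ^ x = h ^ l`, so the Bass identity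
`u_{l,t}(h) u_{l^i,t}(h^l) = u_{l^{i+1},t}(h)` reads
`u_{l^{i+1},t}(h) = u_{l,t}(h) · u_{l^i,t}(h)^x`.
As `c_𝒩` is multiplicative, the claim reduces to `c_𝒩(u^x) = c_𝒩(u)`, together with
`u_{l^t,t}(h) = 1` because `l ^ t ≡ 1`.

Since `c_𝒩(u)` is central, `c_{𝒩^x}(u^x) = c_𝒩(u)^x = c_𝒩(u)`, and `𝒩^x` again runs from `⟨g⟩`
to `G` because `x` normalizes `⟨g⟩`. So it suffices that `c_𝒩(u)` depends only on the two ends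
of `𝒩`, not on the intermediate subgroups or the transversals. This is proved by well-founded
induction on the top group `Q`: two series whose last steps are `N ⊴ Q` and `M ⊴ Q` are both
refined through `N ⊓ M`, after which both sides are products of commuting conjugates `w^q`, with
`q` running over right transversals of `N ⊓ M` in `Q`; these agree since `w^q` only depends on
the coset of `q`.

The Bass identities hold modulo `ℤ ĥ`, where `ĥ` is the sum of the elements of `⟨h⟩`
(`h ĥ = ĥ`, `ĥ ĥ = |h| ĥ`); the coefficient of `ĥ` is then forced by the augmentation, which is
`1` on Bass units.
-/

open MonoidAlgebra Subgroup

theorem List.prod_map_mul_of_commute {ι M : Type*} [Monoid M] (l : List ι) (f g : ι → M)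
    (hc : ∀ a ∈ l, ∀ b ∈ l, Commute (g a) (f b)) :
    (l.map fun i => f i * g i).prod = (l.map f).prod * (l.map g).prod := by
  induction l with
  | nil => simp
  | cons a l ih =>
    simp only [List.map_cons, List.prod_cons, List.mem_cons] at hc ⊢
    have hcomm : Commute (g a) (l.map f).prod :=
      Commute.list_prod_right _ _ fun x hx => by
        obtain ⟨b, hb, rfl⟩ := List.mem_map.mp hx
        exact hc a (.inl rfl) b (.inr hb)
    rw [ih fun p hp q hq => hc p (.inr hp) q (.inr hq), mul_assoc, ← mul_assoc (g a),
      hcomm.eq, mul_assoc, mul_assoc]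

theorem Subgroup.le_normalizer_of_forall_inv_mul_mul_mem {G : Type*} [Group G] {H K : Subgroup G}
    (h : ∀ x ∈ K, ∀ y ∈ H, x⁻¹ * y * x ∈ H) : K ≤ normalizer (H : Set G) :=
  le_normalizer_iff.mpr fun x hx y hy => by simpa using h x⁻¹ (inv_mem hx) y hy

theorem Subgroup.zpowers_pow_eq_self_of_coprime {G : Type*} [Group G] {h : G} {a : ℕ}
    (hcop : (orderOf h).Coprime a) : zpowers (h ^ a) = zpowers h :=
  le_antisymm (zpowers_le.mpr (pow_mem (mem_zpowers h) a))
    (zpowers_le.mpr (mem_zpowers_pow_iff.mpr hcop.symm))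

theorem exists_one_add_smul_pow_eq {R : Type*} [Ring R] {e : R} {m : ℤ} (he : e * e = m • e)
    (q : ℤ) (t : ℕ) : ∃ c : ℤ, (1 + q • e) ^ t = 1 + c • e := by
  induction t with
  | zero => exact ⟨0, by simp⟩
  | succ t ih =>
    obtain ⟨c, hc⟩ := ih
    refine ⟨q + c + c * q * m, ?_⟩
    rw [pow_succ, hc]
    simp only [mul_add, add_mul, one_mul, mul_one, smul_mul_smul_comm, he, smul_smul]
    module

section Conjugation

variable {G : Type*} [Group G]

theorem conjBy_eq_mapDomainRingHom (h : G) :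
    conjBy h = mapDomainRingHom ℤ (MulAut.conj h⁻¹ : G →* G) := by
  funext a
  induction a using MonoidAlgebra.induction_on with
  | of m => simp [conjBy]
  | add x y hx hy => rw [map_add, ← hx, ← hy]; simp only [conjBy, mul_add, add_mul]
  | smul r x hx => rw [map_zsmul, ← hx]; simp only [conjBy, mul_smul_comm, smul_mul_assoc]

theorem conjBy_mul (h : G) (a b : ℤ[G]) : conjBy h (a * b) = conjBy h a * conjBy h b := by
  simp only [conjBy_eq_mapDomainRingHom, map_mul]

theorem conjBy_one (h : G) : conjBy h (1 : ℤ[G]) = 1 := by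
  simp only [conjBy_eq_mapDomainRingHom, map_one]

theorem conjBy_list_prod (h : G) (l : List ℤ[G]) :
    conjBy h l.prod = (l.map (conjBy h)).prod := by
  simp only [conjBy_eq_mapDomainRingHom, map_list_prod]

theorem conjBy_conjBy (h k : G) (a : ℤ[G]) : conjBy k (conjBy h a) = conjBy (h * k) a := by
  simp only [conjBy, mul_inv_rev, map_mul, mul_assoc]

theorem mapDomainRingHom_conjBy (φ : G →* G) (h : G) (a : ℤ[G]) :
    mapDomainRingHom ℤ φ (conjBy h a) = conjBy (φ h) (mapDomainRingHom ℤ φ a) := by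
  simp only [conjBy, map_mul]
  simp

theorem conjBy_eq_self_iff_commute (h : G) (a : ℤ[G]) :
    conjBy h a = a ↔ Commute (of ℤ G h) a := by
  have hinv : of ℤ G h⁻¹ * of ℤ G h = 1 := by rw [← map_mul, inv_mul_cancel, map_one]
  have hinv' : of ℤ G h * of ℤ G h⁻¹ = 1 := by rw [← map_mul, mul_inv_cancel, map_one]
  constructor
  · intro e
    calc of ℤ G h * a = of ℤ G h * conjBy h a := by rw [e]
      _ = a * of ℤ G h := by simp only [conjBy, ← mul_assoc, hinv', one_mul]
  · intro e
    rw [conjBy, mul_assoc, ← e.eq, ← mul_assoc, hinv, one_mul]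

end Conjugation

section SubgroupRing

variable {G : Type*} [Group G]

noncomputable def subgroupRing (K : Subgroup G) : Subring ℤ[G] :=
  Subring.closure (of ℤ G '' K)

theorem of_mem_subgroupRing {K : Subgroup G} {y : G} (hy : y ∈ K) :
    of ℤ G y ∈ subgroupRing K :=
  Subring.subset_closure ⟨y, hy, rfl⟩

theorem subgroupRing_mono : Monotone (subgroupRing (G := G)) :=
  fun _ _ h => Subring.closure_mono (Set.image_mono h)

theorem conjBy_mem_subgroupRing {K : Subgroup G} {h : G} {a : ℤ[G]} (hh : h ∈ K)
    (ha : a ∈ subgroupRing K) : conjBy h a ∈ subgroupRing K :=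
  mul_mem (mul_mem (of_mem_subgroupRing (inv_mem hh)) ha) (of_mem_subgroupRing hh)

theorem map_subgroupRing (φ : G →* G) (K : Subgroup G) :
    (subgroupRing K).map (mapDomainRingHom ℤ φ) = subgroupRing (K.map φ) := by
  rw [subgroupRing, RingHom.map_closure, Set.image_image, subgroupRing, Subgroup.coe_map,
    Set.image_image]
  simp

theorem commute_of_mem_subgroupRing {K : Subgroup G} {a b : ℤ[G]}
    (ha : ∀ y ∈ K, conjBy y a = a) (hb : b ∈ subgroupRing K) : Commute a b := by
  suffices subgroupRing K ≤ Subring.centralizer {a} from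
    (Subring.mem_centralizer_iff.mp (this hb) a rfl)
  refine Subring.closure_le.mpr ?_
  rintro _ ⟨y, hy, rfl⟩
  exact Subring.mem_centralizer_iff.mpr fun _ e =>
    e ▸ ((conjBy_eq_self_iff_commute y a).mp (ha y hy)).eq.symm

structure IsCentralOver (K : Subgroup G) (a : ℤ[G]) : Prop where
  mem : a ∈ subgroupRing K
  conjBy_eq : ∀ y ∈ K, conjBy y a = a

namespace IsCentralOver

variable {K : Subgroup G} {a b : ℤ[G]}

theorem commute (ha : IsCentralOver K a) (hb : IsCentralOver K b) : Commute a b :=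
  commute_of_mem_subgroupRing ha.conjBy_eq hb.mem

theorem map (ha : IsCentralOver K a) (φ : G ≃* G) :
    IsCentralOver (K.map (φ : G →* G)) (mapDomainRingHom ℤ (φ : G →* G) a) := by
  refine ⟨map_subgroupRing (φ : G →* G) K ▸ Subring.mem_map.mpr ⟨a, ha.mem, rfl⟩, ?_⟩
  rintro _ ⟨y, hy, rfl⟩
  rw [← mapDomainRingHom_conjBy, ha.conjBy_eq y hy]

theorem conjBy (ha : IsCentralOver K a) {q : G} (hq : q ∈ normalizer (K : Set G)) :
    IsCentralOver K (conjBy q a) := by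
  have hK : K.map (MulAut.conj q⁻¹ : G →* G) = K :=
    mem_normalizer_iff_map_conj_eq.mp (inv_mem hq)
  simpa only [hK, conjBy_eq_mapDomainRingHom] using ha.map (MulAut.conj q⁻¹)

end IsCentralOver

theorem isCentralOver_of_mem_subgroupRing {K : Subgroup G} [IsMulCommutative K] {a : ℤ[G]}
    (ha : a ∈ subgroupRing K) : IsCentralOver K a := by
  refine ⟨ha, fun y hy => ?_⟩
  have hfix : Set.EqOn (mapDomainRingHom ℤ (MulAut.conj y⁻¹ : G →* G)) (RingHom.id ℤ[G])
      (of ℤ G '' K) := by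
    rintro _ ⟨z, hz, rfl⟩
    have hyz : y⁻¹ * z * y = z := by
      have := congrArg Subtype.val
        (isMulCommutative_iff.mp inferInstance (⟨z, hz⟩ : K) ⟨y, hy⟩)
      simp only [Subgroup.coe_mul] at this
      rw [mul_assoc, this, inv_mul_cancel_left]
    simp [hyz]
  rw [conjBy_eq_mapDomainRingHom, RingHom.eqOn_set_closure hfix ha, RingHom.id_apply]

end SubgroupRing

section Transversal

variable {G : Type*} [Group G]

structure IsRightTransversal (H K : Subgroup G) (L : List G) : Prop where
  nodup : L.Nodup
  mem : ∀ t ∈ L, t ∈ K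
  existsUnique : ∀ y ∈ K, ∃! t, t ∈ L ∧ y * t⁻¹ ∈ H

local notation "π" H => Quotient.mk (QuotientGroup.rightRel H)

theorem rightRel_mk_eq_mk_iff (H : Subgroup G) (a b : G) :
    ((π H) a = (π H) b) ↔ b * a⁻¹ ∈ H :=
  Quotient.eq.trans QuotientGroup.rightRel_apply

theorem exists_isRightTransversal [Finite G] {H K : Subgroup G} (hHK : H ≤ K) :
    ∃ L, IsRightTransversal H K L := by
  classical
  let rep : G → G := fun y => ((π H) y).out
  have hrep : ∀ y, (π H) (rep y) = (π H) y := fun y => Quotient.out_eq _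
  have hrepK : ∀ y ∈ K, rep y ∈ K := fun y hy => by
    simpa using K.mul_mem (K.inv_mem (hHK ((rightRel_mk_eq_mk_iff H _ _).mp (hrep y)))) hy
  refine ⟨((K : Set G).toFinite.toFinset.image rep).toList, Finset.nodup_toList _, ?_, ?_⟩
  · intro t ht
    obtain ⟨y, hy, rfl⟩ := Finset.mem_image.mp (Finset.mem_toList.mp ht)
    exact hrepK y (by simpa using hy)
  · intro y hy
    refine ⟨rep y,
      ⟨Finset.mem_toList.mpr (Finset.mem_image.mpr ⟨y, by simpa using hy, rfl⟩),
      (rightRel_mk_eq_mk_iff H _ _).mp (hrep y)⟩, ?_⟩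
    rintro t ⟨ht, htH⟩
    obtain ⟨z, -, rfl⟩ := Finset.mem_image.mp (Finset.mem_toList.mp ht)
    exact congrArg Quotient.out ((hrep z).symm.trans ((rightRel_mk_eq_mk_iff H _ _).mpr htH))

namespace IsRightTransversal

variable {H K : Subgroup G} {L : List G}

theorem mem_map_mk_iff (hL : IsRightTransversal H K L) (c : Quotient (QuotientGroup.rightRel H)) :
    c ∈ L.map (π H) ↔ ∃ y ∈ K, (π H) y = c := by
  simp only [List.mem_map]
  constructor
  · rintro ⟨t, ht, rfl⟩
    exact ⟨t, hL.mem t ht, rfl⟩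
  · rintro ⟨y, hy, rfl⟩
    obtain ⟨t, ⟨ht, htH⟩, -⟩ := hL.existsUnique y hy
    exact ⟨t, ht, (rightRel_mk_eq_mk_iff H t y).mpr htH⟩

theorem eq_of_mul_inv_mem (hL : IsRightTransversal H K L) {a b : G} (ha : a ∈ L) (hb : b ∈ L)
    (hab : a * b⁻¹ ∈ H) : a = b := by
  obtain ⟨t, -, huniq⟩ := hL.existsUnique a (hL.mem a ha)
  rw [huniq a ⟨ha, by simp⟩, huniq b ⟨hb, hab⟩]

theorem nodup_map_mk (hL : IsRightTransversal H K L) : (L.map (π H)).Nodup :=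
  hL.nodup.map_on fun _ ha _ hb hab =>
    hL.eq_of_mul_inv_mem ha hb ((rightRel_mk_eq_mk_iff H _ _).mp hab.symm)

theorem perm_map_mk {L' : List G} (hL : IsRightTransversal H K L)
    (hL' : IsRightTransversal H K L') : (L.map (π H)).Perm (L'.map (π H)) := by
  classical
  exact List.perm_of_nodup_nodup_toFinset_eq hL.nodup_map_mk hL'.nodup_map_mk <| by
    ext c
    simp only [List.mem_toFinset, hL.mem_map_mk_iff, hL'.mem_map_mk_iff]

theorem prod_map_conjBy_eq {L' : List G} (hL : IsRightTransversal H K L)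
    (hL' : IsRightTransversal H K L') (hK : K ≤ normalizer (H : Set G)) {w : ℤ[G]}
    (hw : IsCentralOver H w) :
    (L.map (conjBy · w)).prod = (L'.map (conjBy · w)).prod := by
  -- `conjBy · w` is constant on right cosets of `H`; both lists meet each coset in `K` once.
  have hconst : ∀ a b : G, QuotientGroup.rightRel H a b → conjBy a w = conjBy b w := by
    intro a b hab
    have hba : b * a⁻¹ ∈ H := QuotientGroup.rightRel_apply.mp hab
    calc conjBy a w = conjBy a (conjBy (b * a⁻¹) w) := by rw [hw.conjBy_eq _ hba]
      _ = conjBy b w := by rw [conjBy_conjBy, inv_mul_cancel_right]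
  have hlift : ∀ l : List G, l.map (conjBy · w) = (l.map (π H)).map (Quotient.lift _ hconst) :=
    fun l => by rw [List.map_map]; rfl
  rw [hlift L, hlift L']
  refine ((hL.perm_map_mk hL').map _).prod_eq' ?_
  rw [← hlift L]
  refine List.pairwise_of_forall_mem_list fun a ha b hb => ?_
  obtain ⟨q, hq, rfl⟩ := List.mem_map.mp ha
  obtain ⟨q', hq', rfl⟩ := List.mem_map.mp hb
  exact (hw.conjBy (hK (hL.mem q hq))).commute (hw.conjBy (hK (hL.mem q' hq')))

theorem singleton_one (H : Subgroup G) :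
    IsRightTransversal H H [1] :=
  ⟨List.nodup_singleton 1, by simp, fun y hy => ⟨1, by simpa using hy, by simp⟩⟩

theorem map_mul_right (hL : IsRightTransversal H K L) {y : G} (hy : y ∈ K) :
    IsRightTransversal H K (L.map (· * y)) := by
  refine ⟨hL.nodup.map (mul_left_injective y), ?_, fun z hz => ?_⟩
  · simp only [List.mem_map]
    rintro _ ⟨t, ht, rfl⟩
    exact K.mul_mem (hL.mem t ht) hy
  · obtain ⟨t, ⟨ht, htH⟩, huniq⟩ :=
      hL.existsUnique (z * y⁻¹) (K.mul_mem hz (K.inv_mem hy))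
    refine ⟨t * y, ⟨List.mem_map_of_mem ht, by simpa [mul_assoc] using htH⟩, ?_⟩
    rintro _ ⟨ht', ht'H⟩
    obtain ⟨a, ha, rfl⟩ := List.mem_map.mp ht'
    rw [huniq a ⟨ha, by simpa [mul_assoc] using ht'H⟩]

theorem map_equiv (hL : IsRightTransversal H K L) (φ : G ≃* G) :
    IsRightTransversal (H.map (φ : G →* G)) (K.map (φ : G →* G)) (L.map φ) := by
  refine ⟨hL.nodup.map φ.injective, ?_, fun y hy => ?_⟩
  · simp only [List.mem_map]
    rintro _ ⟨t, ht, rfl⟩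
    exact Subgroup.mem_map_of_mem _ (hL.mem t ht)
  · obtain ⟨y, hyK, rfl⟩ := Subgroup.mem_map.mp hy
    obtain ⟨t, ⟨ht, htH⟩, huniq⟩ := hL.existsUnique y hyK
    have hmap (a : G) : φ y * (φ a)⁻¹ ∈ H.map (φ : G →* G) ↔ y * a⁻¹ ∈ H := by
      rw [← map_inv, ← map_mul]
      exact (Subgroup.mem_map_iff_mem φ.injective)
    refine ⟨φ t, ⟨List.mem_map_of_mem ht, (hmap t).mpr htH⟩, ?_⟩
    rintro _ ⟨ht', ht'H⟩
    obtain ⟨a, ha, rfl⟩ := List.mem_map.mp ht'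
    rw [huniq a ⟨ha, (hmap a).mp ht'H⟩]

theorem flatMap {M : Subgroup G} {LD LM : List G} (hHM : H ≤ M) (hMK : M ≤ K)
    (hD : IsRightTransversal H M LD) (hM : IsRightTransversal M K LM) :
    IsRightTransversal H K (LM.flatMap fun h => LD.map (· * h)) := by
  refine ⟨List.nodup_flatMap.mpr ⟨fun h _ => hD.nodup.map (mul_left_injective h), ?_⟩, ?_,
    ?_⟩
  · refine hM.nodup.imp_of_mem fun {h h'} hh hh' hne => List.disjoint_left.mpr ?_
    simp only [List.mem_map]
    rintro _ ⟨d, hd, rfl⟩ ⟨d', hd', he⟩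
    refine hne (hM.eq_of_mul_inv_mem hh hh' ?_)
    have : h * h'⁻¹ = d⁻¹ * d' := by
      rw [eq_inv_mul_iff_mul_eq, ← mul_assoc, ← he, mul_inv_cancel_right]
    rw [this]
    exact M.mul_mem (M.inv_mem (hD.mem d hd)) (hD.mem d' hd')
  · simp only [List.mem_flatMap, List.mem_map]
    rintro _ ⟨h, hh, d, hd, rfl⟩
    exact K.mul_mem (hMK (hD.mem d hd)) (hM.mem h hh)
  · intro y hy
    obtain ⟨h, ⟨hh, hyh⟩, -⟩ := hM.existsUnique y hy
    obtain ⟨d, ⟨hd, hyhd⟩, -⟩ := hD.existsUnique (y * h⁻¹) hyh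
    refine ⟨d * h, ⟨List.mem_flatMap.mpr ⟨h, hh, List.mem_map_of_mem hd⟩, by
      simpa [mul_assoc] using hyhd⟩, ?_⟩
    simp only [List.mem_flatMap, List.mem_map]
    rintro _ ⟨⟨h', hh', d', hd', rfl⟩, hH⟩
    have hyh' : y * h'⁻¹ * d'⁻¹ ∈ H := by simpa [mul_assoc] using hH
    have hh'h : h' = h := hM.eq_of_mul_inv_mem hh' hh <| by
      have := M.mul_mem (M.inv_mem (M.mul_mem (hHM hyh') (hD.mem d' hd'))) hyh
      simpa [mul_assoc] using this
    subst hh'h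
    rw [hD.eq_of_mul_inv_mem hd' hd (by simpa [mul_assoc] using H.mul_mem (H.inv_mem hyh') hyhd)]

end IsRightTransversal

end Transversal

section BassUnits

variable {G : Type*} [Group G]

noncomputable def augmentation : ℤ[G] →ₐ[ℤ] ℤ :=
  lift ℤ ℤ G 1

theorem augmentation_of (g : G) : augmentation (of ℤ G g) = 1 :=
  lift_of _ g

noncomputable def geomSum (h : G) (a : ℕ) : ℤ[G] :=
  ∑ i ∈ Finset.range a, of ℤ G (h ^ i)

theorem augmentation_geomSum (h : G) (a : ℕ) : augmentation (geomSum h a) = a := by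
  simp only [geomSum, map_sum, augmentation_of, Finset.sum_const, Finset.card_range, nsmul_eq_mul,
    mul_one]

theorem geomSum_add (h : G) (a b : ℕ) :
    geomSum h (a + b) = geomSum h a + of ℤ G (h ^ a) * geomSum h b := by
  simp only [geomSum, Finset.sum_range_add, Finset.mul_sum, ← map_mul, pow_add]

theorem geomSum_one (h : G) : geomSum h 1 = 1 := by
  rw [geomSum, Finset.sum_range_one, pow_zero, map_one]

theorem geomSum_succ (h : G) (a : ℕ) : geomSum h (a + 1) = geomSum h a + of ℤ G (h ^ a) :=
  Finset.sum_range_succ _ _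

theorem commute_geomSum (h : G) (k a l b : ℕ) :
    Commute (geomSum (h ^ k) a) (geomSum (h ^ l) b) :=
  .sum_left _ _ _ fun i _ => .sum_right _ _ _ fun j _ => by
    simpa only [← pow_mul] using ((Commute.refl h).pow_pow (k * i) (l * j)).map (of ℤ G)

theorem geomSum_mul_geomSum_pow (h : G) (a b : ℕ) :
    geomSum h a * geomSum (h ^ a) b = geomSum h (a * b) := by
  induction b with
  | zero => simp [geomSum]
  | succ b ih =>
    have hcomm : Commute (geomSum h a) (of ℤ G (h ^ (a * b))) :=
      .sum_left _ _ _ fun i _ => ((Commute.refl h).pow_pow i (a * b)).map (of ℤ G)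
    rw [geomSum_succ, mul_add, ih, ← pow_mul, hcomm.eq, mul_add_one a b, geomSum_add]

theorem of_pow_mul_geomSum_orderOf (h : G) (j : ℕ) :
    of ℤ G (h ^ j) * geomSum h (orderOf h) = geomSum h (orderOf h) := by
  have hstep : of ℤ G h * geomSum h (orderOf h) = geomSum h (orderOf h) := by
    have h1 := geomSum_add h 1 (orderOf h)
    rw [add_comm 1, geomSum_succ, pow_orderOf_eq_one, map_one, geomSum_one, pow_one,
      add_comm] at h1
    exact (add_left_cancel h1).symm
  induction j with
  | zero => rw [pow_zero, map_one, one_mul]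
  | succ j ih => rw [pow_succ, map_mul, mul_assoc, hstep, ih]

theorem geomSum_pow_mul_geomSum_orderOf (h : G) (k b : ℕ) :
    geomSum (h ^ k) b * geomSum h (orderOf h) = (b : ℤ) • geomSum h (orderOf h) := by
  calc geomSum (h ^ k) b * geomSum h (orderOf h)
      = ∑ i ∈ Finset.range b, of ℤ G ((h ^ k) ^ i) * geomSum h (orderOf h) :=
        Finset.sum_mul _ _ _
    _ = (b : ℤ) • geomSum h (orderOf h) := by
      simp only [← pow_mul, of_pow_mul_geomSum_orderOf, Finset.sum_const, Finset.card_range,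
        natCast_zsmul]

theorem geomSum_orderOf_mul_self (h : G) :
    geomSum h (orderOf h) * geomSum h (orderOf h) =
      (orderOf h : ℤ) • geomSum h (orderOf h) := by
  simpa using geomSum_pow_mul_geomSum_orderOf h 1 (orderOf h)

theorem geomSum_add_orderOf_mul (h : G) (a q : ℕ) :
    geomSum h (a + orderOf h * q) = geomSum h a + (q : ℤ) • geomSum h (orderOf h) := by
  induction q with
  | zero => simp
  | succ q ih =>
    rw [mul_add_one, ← add_assoc, geomSum_add, ih, of_pow_mul_geomSum_orderOf, Nat.cast_succ,
      add_smul, one_smul, add_assoc]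

theorem geomSum_pow_pow_mul_geomSum_orderOf (h : G) (k b t : ℕ) :
    geomSum (h ^ k) b ^ t * geomSum h (orderOf h) = ((b : ℤ) ^ t) • geomSum h (orderOf h) := by
  induction t with
  | zero => simp
  | succ t ih =>
    rw [pow_succ, mul_assoc, geomSum_pow_mul_geomSum_orderOf, mul_smul_comm, ih, smul_smul,
      pow_succ']

theorem mapDomainRingHom_bassElem (φ : G ≃* G) (h : G) (a t : ℕ) :
    mapDomainRingHom ℤ (φ : G →* G) (bassElem h a t) = bassElem (φ h) a t := by
  have hof (g : G) : mapDomainRingHom ℤ (φ : G →* G) (of ℤ G g) = of ℤ G (φ g) := by simp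
  simp only [bassElem, map_add, map_pow, map_zsmul, map_sum, hof, map_pow, MulEquiv.orderOf_eq]

theorem conjBy_bassElem (x h : G) (a t : ℕ) :
    conjBy x (bassElem h a t) = bassElem (x⁻¹ * h * x) a t := by
  rw [conjBy_eq_mapDomainRingHom, mapDomainRingHom_bassElem, MulAut.conj_apply, inv_inv]

theorem bassElem_mem_subgroupRing {K : Subgroup G} {h : G} (hh : h ∈ K)
    (a t : ℕ) : bassElem h a t ∈ subgroupRing K :=
  add_mem (pow_mem (sum_mem fun i _ => of_mem_subgroupRing (pow_mem hh i)) t)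
    (zsmul_mem (sum_mem fun i _ => of_mem_subgroupRing (pow_mem hh i)) _)

variable [Finite G]

theorem geomSum_orderOf_eq_of_zpowers_eq {y z : G} (h : zpowers y = zpowers z) :
    geomSum y (orderOf y) = geomSum z (orderOf z) := by
  classical
  have key (x : G) :
      geomSum x (orderOf x) = ∑ g ∈ (Finset.range (orderOf x)).image (x ^ ·), of ℤ G g :=
    (Finset.sum_image fun i hi j hj hij =>
      pow_injOn_Iio_orderOf (by simpa using hi) (by simpa using hj) hij).symm
  rw [key, key]
  congr 1
  ext g
  rw [← mem_zpowers_iff_mem_range_orderOf, ← mem_zpowers_iff_mem_range_orderOf, h]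

theorem bassElem_eq_add_smul {h : G} {a t : ℕ} {A : ℤ}
    (hA : 1 - (a : ℤ) ^ t = orderOf h * A) :
    bassElem h a t = geomSum h a ^ t + A • geomSum h (orderOf h) := by
  rw [bassElem, hA, Int.mul_ediv_cancel_left _ (by exact_mod_cast (orderOf_pos h).ne')]
  rfl

theorem augmentation_bassElem {h : G} {a t : ℕ} (hn : (orderOf h : ℤ) ∣ 1 - (a : ℤ) ^ t) :
    augmentation (bassElem h a t) = 1 := by
  obtain ⟨A, hA⟩ := hn
  rw [bassElem_eq_add_smul hA, map_add, map_pow, map_zsmul, augmentation_geomSum,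
    augmentation_geomSum, smul_eq_mul]
  linear_combination -hA

theorem eq_bassElem_of_augmentation_eq_one {h : G} {a t : ℕ} {c : ℤ} {w : ℤ[G]}
    (hn : (orderOf h : ℤ) ∣ 1 - (a : ℤ) ^ t)
    (hw : w = geomSum h a ^ t + c • geomSum h (orderOf h)) (hε : augmentation w = 1) :
    w = bassElem h a t := by
  obtain ⟨A, hA⟩ := hn
  have hεw : (a : ℤ) ^ t + c * orderOf h = 1 := by
    rwa [hw, map_add, map_pow, map_zsmul, augmentation_geomSum, augmentation_geomSum,
      smul_eq_mul] at hε
  have hn0 : (orderOf h : ℤ) ≠ 0 := by exact_mod_cast (orderOf_pos h).ne'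
  have hc : c = A := mul_left_cancel₀ hn0 (by linear_combination hεw + hA)
  rw [hw, hc, bassElem_eq_add_smul hA]

theorem bassElem_mul_bassElem_pow {h : G} {a b t : ℕ} (hcop : (orderOf h).Coprime a)
    (ha : (orderOf h : ℤ) ∣ 1 - (a : ℤ) ^ t) (hb : (orderOf h : ℤ) ∣ 1 - (b : ℤ) ^ t) :
    bassElem h a t * bassElem (h ^ a) b t = bassElem h (a * b) t := by
  have hord : orderOf (h ^ a) = orderOf h := hcop.orderOf_pow
  obtain ⟨A, hA⟩ := ha
  obtain ⟨B, hB⟩ := hb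
  have hB' : 1 - (b : ℤ) ^ t = orderOf (h ^ a) * B := hord ▸ hB
  have hab : (orderOf h : ℤ) ∣ 1 - ((a * b : ℕ) : ℤ) ^ t :=
    ⟨A + a ^ t * B, by push_cast; linear_combination hA + (a : ℤ) ^ t * hB⟩
  have hPX : Commute (geomSum h a) (geomSum (h ^ a) b) := by
    simpa using commute_geomSum h 1 a a b
  have heX : Commute (geomSum h (orderOf h)) (geomSum (h ^ a) b ^ t) := by
    simpa using (commute_geomSum h 1 (orderOf h) a b).pow_right t
  have hPe := geomSum_pow_pow_mul_geomSum_orderOf h 1 a t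
  rw [pow_one] at hPe
  refine eq_bassElem_of_augmentation_eq_one (c := A * b ^ t + B * a ^ t + A * B * orderOf h)
    hab ?_ ?_
  · rw [bassElem_eq_add_smul hA, bassElem_eq_add_smul hB',
      geomSum_orderOf_eq_of_zpowers_eq (zpowers_pow_eq_self_of_coprime hcop), add_mul, mul_add,
      mul_add, ← hPX.mul_pow, geomSum_mul_geomSum_pow, mul_smul_comm, hPe, smul_mul_assoc, heX.eq,
      geomSum_pow_pow_mul_geomSum_orderOf, smul_mul_smul_comm, geomSum_orderOf_mul_self]
    module
  · rw [map_mul, augmentation_bassElem ⟨A, hA⟩, augmentation_bassElem ⟨B, hB'⟩, one_mul]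

theorem bassElem_eq_one {h : G} {a t : ℕ} (ha : 0 < a) (hmod : a ≡ 1 [MOD orderOf h]) :
    bassElem h a t = 1 := by
  obtain ⟨q, hq⟩ : orderOf h ∣ a - 1 := (Nat.modEq_iff_dvd' ha).mp hmod.symm
  have hP : geomSum h a = 1 + (q : ℤ) • geomSum h (orderOf h) := by
    rw [show a = 1 + orderOf h * q by omega, geomSum_add_orderOf_mul, geomSum_one]
  obtain ⟨c, hc⟩ := exists_one_add_smul_pow_eq (geomSum_orderOf_mul_self h) q t
  have hn : (orderOf h : ℤ) ∣ 1 - (a : ℤ) ^ t := by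
    simpa using Nat.modEq_iff_dvd.mp (hmod.pow t)
  refine (eq_bassElem_of_augmentation_eq_one (c := -c) hn ?_ (map_one _)).symm
  rw [hP, hc, neg_smul, add_neg_cancel_right]

end BassUnits

structure TransversalChain (G : Type*) [Group G] where
  N : ℕ → Subgroup G
  T : ℕ → List G
  le_succ : ∀ i, N i ≤ N (i + 1)
  le_normalizer : ∀ i, N (i + 1) ≤ normalizer (N i : Set G)
  isRightTransversal : ∀ i, IsRightTransversal (N i) (N (i + 1)) (T i)

namespace TransversalChain

variable {G : Type*} [Group G]

noncomputable def cSeq (C : TransversalChain G) (u : ℤ[G]) : ℕ → ℤ[G]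
  | 0 => u
  | i + 1 => ((C.T i).map fun h => conjBy h (C.cSeq u i)).prod

variable {C : TransversalChain G} {u v : ℤ[G]}

theorem cSeq_succ (i : ℕ) :
    C.cSeq u (i + 1) = ((C.T i).map fun h => conjBy h (C.cSeq u i)).prod := rfl

theorem N_mono (C : TransversalChain G) : Monotone C.N :=
  monotone_nat_of_le_succ C.le_succ

theorem isCentralOver_cSeq (hu : IsCentralOver (C.N 0) u) (i : ℕ) :
    IsCentralOver (C.N i) (C.cSeq u i) := by
  induction i with
  | zero => exact hu
  | succ i ih =>
    have hT := C.isRightTransversal i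
    refine ⟨list_prod_mem fun a ha => ?_, fun y hy => ?_⟩
    · obtain ⟨h, hh, rfl⟩ := List.mem_map.mp ha
      exact conjBy_mem_subgroupRing (hT.mem h hh) (subgroupRing_mono (C.le_succ i) ih.mem)
    · rw [cSeq_succ, conjBy_list_prod, List.map_map]
      have hshift : (conjBy y ∘ fun h => conjBy h (C.cSeq u i)) =
          (fun q => conjBy q (C.cSeq u i)) ∘ (· * y) := by
        funext h
        exact conjBy_conjBy h y _
      rw [hshift, ← List.map_map]
      exact (hT.map_mul_right hy).prod_map_conjBy_eq hT (C.le_normalizer i) ih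

theorem cSeq_one (i : ℕ) : C.cSeq 1 i = 1 := by
  induction i with
  | zero => rfl
  | succ i ih => simp [cSeq_succ, ih, conjBy_one]

theorem cSeq_mul (hu : IsCentralOver (C.N 0) u) (hv : IsCentralOver (C.N 0) v) (i : ℕ) :
    C.cSeq (u * v) i = C.cSeq u i * C.cSeq v i := by
  induction i with
  | zero => rfl
  | succ i ih =>
    simp only [cSeq_succ, ih, conjBy_mul]
    refine List.prod_map_mul_of_commute _ _ _ fun a ha b hb => ?_
    have hT := C.isRightTransversal i
    exact ((isCentralOver_cSeq hv i).conjBy (C.le_normalizer i (hT.mem a ha))).commute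
      ((isCentralOver_cSeq hu i).conjBy (C.le_normalizer i (hT.mem b hb)))

theorem cSeq_succ_of_N_eq (hu : IsCentralOver (C.N 0) u) {r : ℕ} (h : C.N r = C.N (r + 1)) :
    C.cSeq u (r + 1) = C.cSeq u r := by
  have hT := C.isRightTransversal r
  rw [← h] at hT
  rw [cSeq_succ, hT.prod_map_conjBy_eq (.singleton_one _) (Subgroup.le_normalizer (H := C.N r))
    (isCentralOver_cSeq hu r), List.map_singleton, List.prod_singleton, conjBy, inv_one, map_one,
    one_mul, mul_one]

theorem cSeq_eq_self_of_N_eq (hu : IsCentralOver (C.N 0) u) {s : ℕ} (h : C.N s = C.N 0) :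
    C.cSeq u s = u := by
  induction s with
  | zero => rfl
  | succ s ih =>
    have hs : C.N s = C.N (s + 1) :=
      le_antisymm (C.le_succ s) (h ▸ C.N_mono (Nat.zero_le s))
    rw [cSeq_succ_of_N_eq hu hs, ih (hs.trans h)]

theorem cSeq_succ_eq_prod_flatMap {r : ℕ} {LD : List G} {w : ℤ[G]}
    (hw : C.cSeq u r = (LD.map (conjBy · w)).prod) :
    C.cSeq u (r + 1) = (((C.T r).flatMap fun h => LD.map (· * h)).map (conjBy · w)).prod := by
  rw [cSeq_succ, hw, List.map_flatMap, List.flatMap, List.prod_flatten, List.map_map]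
  simp only [Function.comp_def, conjBy_list_prod, List.map_map, conjBy_conjBy]

def map (C : TransversalChain G) (φ : G ≃* G) : TransversalChain G where
  N i := (C.N i).map (φ : G →* G)
  T i := (C.T i).map φ
  le_succ i := Subgroup.map_mono (C.le_succ i)
  le_normalizer i := (Subgroup.map_mono (C.le_normalizer i)).trans (le_normalizer_map _)
  isRightTransversal i := (C.isRightTransversal i).map_equiv φ

theorem cSeq_map (C : TransversalChain G) (φ : G ≃* G) (u : ℤ[G]) (i : ℕ) :
    (C.map φ).cSeq (mapDomainRingHom ℤ (φ : G →* G) u) i =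
      mapDomainRingHom ℤ (φ : G →* G) (C.cSeq u i) := by
  induction i with
  | zero => rfl
  | succ i ih =>
    rw [cSeq_succ, cSeq_succ, ih, map_list_prod, List.map_map]
    change (((C.T i).map φ).map _).prod = _
    rw [List.map_map]
    congr 2
    funext h
    exact (mapDomainRingHom_conjBy _ h _).symm

def restrictN (C : TransversalChain G) (r : ℕ) (M : Subgroup G) (j : ℕ) : Subgroup G :=
  if j ≤ r then C.N j ⊓ M else C.N r

theorem restrictN_le_succ (C : TransversalChain G) (r : ℕ) (M : Subgroup G) (j : ℕ) :
    C.restrictN r M j ≤ C.restrictN r M (j + 1) := by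
  unfold restrictN
  split_ifs with h₁ h₂ h₂
  · exact inf_le_inf_right M (C.le_succ j)
  · exact (inf_le_left).trans (C.N_mono h₁)
  · omega
  · exact le_rfl

theorem restrictN_succ_le_normalizer (C : TransversalChain G) {r : ℕ} {M : Subgroup G}
    (hM : C.N r ≤ normalizer (M : Set G)) (j : ℕ) :
    C.restrictN r M (j + 1) ≤ normalizer (C.restrictN r M j : Set G) := by
  unfold restrictN
  split_ifs with h₁ h₂ h₂
  · exact (inf_le_inf (C.le_normalizer j) Subgroup.le_normalizer).trans
      inf_normalizer_le_normalizer_inf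
  · omega
  · obtain rfl : j = r := by omega
    exact (le_inf Subgroup.le_normalizer hM).trans inf_normalizer_le_normalizer_inf
  · exact Subgroup.le_normalizer

noncomputable def restrict [Finite G] (C : TransversalChain G) (r : ℕ) (M : Subgroup G)
    (hM : C.N r ≤ normalizer (M : Set G)) : TransversalChain G where
  N := C.restrictN r M
  T j := (exists_isRightTransversal (C.restrictN_le_succ r M j)).choose
  le_succ := C.restrictN_le_succ r M
  le_normalizer := C.restrictN_succ_le_normalizer hM
  isRightTransversal j := (exists_isRightTransversal (C.restrictN_le_succ r M j)).choose_spec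

section Restrict

variable [Finite G] (C : TransversalChain G) {r : ℕ} {M : Subgroup G}
  (hM : C.N r ≤ normalizer (M : Set G))

theorem restrict_N_of_le {j : ℕ} (hj : j ≤ r) : (C.restrict r M hM).N j = C.N j ⊓ M :=
  if_pos hj

theorem restrict_N_succ : (C.restrict r M hM).N (r + 1) = C.N r :=
  if_neg (by omega)

end Restrict

def CSeqWellDefinedAt (u : ℤ[G]) (B P : Subgroup G) : Prop :=
  ∀ (C C' : TransversalChain G) (r s : ℕ), C.N 0 = B → C'.N 0 = B → C.N r = P →
    C'.N s = P → C.cSeq u r = C'.cSeq u s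

theorem cSeq_succ_eq_of_lt [Finite G] {B : Subgroup G} (hu : IsCentralOver B u)
    {C C' : TransversalChain G} {r s : ℕ} (hC : C.N 0 = B) (hC' : C'.N 0 = B)
    (htop : C.N (r + 1) = C'.N (s + 1)) (hr : C.N r < C.N (r + 1)) (hs : C'.N s < C'.N (s + 1))
    (ih : ∀ P < C.N (r + 1), CSeqWellDefinedAt u B P) :
    C.cSeq u (r + 1) = C'.cSeq u (s + 1) := by
  set Q := C.N (r + 1)
  have hNQ : C.N r ≤ Q := hr.le
  have hMQ : C'.N s ≤ Q := htop ▸ hs.le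
  have hQN : Q ≤ normalizer (C.N r : Set G) := C.le_normalizer r
  have hQM : Q ≤ normalizer (C'.N s : Set G) := htop ▸ C'.le_normalizer s
  set C₁ := C.restrict r (C'.N s) (hNQ.trans hQM)
  set C₂ := C'.restrict s (C.N r) (hMQ.trans hQN)
  have hC₁ : C₁.N 0 = B := by
    rw [restrict_N_of_le _ _ (Nat.zero_le r), hC, inf_eq_left, ← hC']
    exact C'.N_mono (Nat.zero_le s)
  have hC₂ : C₂.N 0 = B := by
    rw [restrict_N_of_le _ _ (Nat.zero_le s), hC', inf_eq_left, ← hC]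
    exact C.N_mono (Nat.zero_le r)
  have hD : C₁.N r = C.N r ⊓ C'.N s := restrict_N_of_le _ _ le_rfl
  have hD' : C₂.N s = C.N r ⊓ C'.N s := (restrict_N_of_le _ _ le_rfl).trans (inf_comm _ _)
  have hDQ : C.N r ⊓ C'.N s < Q := lt_of_le_of_lt inf_le_left hr
  have hw : C₁.cSeq u r = C₂.cSeq u s := ih _ hDQ C₁ C₂ r s hC₁ hC₂ hD hD'
  have h₁ : C.cSeq u r = C₁.cSeq u (r + 1) :=
    ih _ hr C C₁ r (r + 1) hC hC₁ rfl (restrict_N_succ _ _)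
  have h₂ : C'.cSeq u s = C₂.cSeq u (s + 1) :=
    ih _ (htop ▸ hs) C' C₂ s (s + 1) hC' hC₂ rfl (restrict_N_succ _ _)
  have hT₁ := C₁.isRightTransversal r
  rw [hD, restrict_N_succ] at hT₁
  have hT₂ := C₂.isRightTransversal s
  rw [hD', restrict_N_succ] at hT₂
  have hQD : Q ≤ normalizer (C.N r ⊓ C'.N s : Set G) :=
    (le_inf hQN hQM).trans inf_normalizer_le_normalizer_inf
  rw [cSeq_succ_eq_prod_flatMap (h₁.trans (cSeq_succ r)),
    cSeq_succ_eq_prod_flatMap (h₂.trans (cSeq_succ s)), ← hw]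
  exact (hT₁.flatMap inf_le_left hNQ (C.isRightTransversal r)).prod_map_conjBy_eq
    (hT₂.flatMap inf_le_right hMQ (htop ▸ C'.isRightTransversal s)) hQD
    (hD ▸ isCentralOver_cSeq (hC₁ ▸ hu) r)

theorem cSeqWellDefinedAt [Finite G] {B : Subgroup G} (hu : IsCentralOver B u)
    (P : Subgroup G) : CSeqWellDefinedAt u B P := by
  induction P using WellFoundedLT.induction with
  | _ P ih =>
  intro C C' r s hC hC' hr hs
  induction hn : r + s using Nat.strong_induction_on generalizing r s with
  | _ n ihn =>
  rcases r with _ | r <;> rcases s with _ | s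
  · rfl
  · exact (cSeq_eq_self_of_N_eq (hC' ▸ hu) (hs.trans (hr.symm.trans (hC.trans hC'.symm)))).symm
  · exact cSeq_eq_self_of_N_eq (hC ▸ hu) (hr.trans (hs.symm.trans (hC'.trans hC.symm)))
  · by_cases hr' : C.N r = C.N (r + 1)
    · rw [cSeq_succ_of_N_eq (hC ▸ hu) hr']
      exact ihn (r + (s + 1)) (by omega) r (s + 1) (hr'.trans hr) hs rfl
    by_cases hs' : C'.N s = C'.N (s + 1)
    · rw [cSeq_succ_of_N_eq (hC' ▸ hu) hs']
      exact ihn (r + 1 + s) (by omega) (r + 1) s hr (hs'.trans hs) rfl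
    exact cSeq_succ_eq_of_lt hu hC hC' (hr.trans hs.symm) (lt_of_le_of_ne (C.le_succ r) hr')
      (lt_of_le_of_ne (C'.le_succ s) hs') (hr ▸ ih)

theorem cSeq_conjBy_of_mem_normalizer [Finite G] {C : TransversalChain G} {r : ℕ}
    (htop : C.N r = ⊤) (hu : IsCentralOver (C.N 0) u) {x : G}
    (hx : x ∈ normalizer (C.N 0 : Set G)) : C.cSeq (conjBy x u) r = C.cSeq u r := by
  have h0 : (C.map (MulAut.conj x⁻¹)).N 0 = C.N 0 :=
    mem_normalizer_iff_map_conj_eq.mp (inv_mem hx)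
  have htop' : (C.map (MulAut.conj x⁻¹)).N r = ⊤ := by
    simp only [map, htop]
    exact Subgroup.map_top_of_surjective _ (MulAut.conj x⁻¹).surjective
  calc C.cSeq (conjBy x u) r = (C.map (MulAut.conj x⁻¹)).cSeq (conjBy x u) r :=
        cSeqWellDefinedAt (hu.conjBy hx) ⊤ _ _ r r rfl h0 htop htop'
    _ = conjBy x (C.cSeq u r) := by rw [conjBy_eq_mapDomainRingHom, cSeq_map]
    _ = C.cSeq u r := (isCentralOver_cSeq hu r).conjBy_eq x (htop ▸ Subgroup.mem_top x)

def ofSubnormalSeries {g : G} {S : SubnormalSeries G g} (TS : TransversalSystem S) :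
    TransversalChain G where
  N := S.N
  T := TS.T
  le_succ := S.le_succ
  le_normalizer i := Subgroup.le_normalizer_of_forall_inv_mul_mul_mem (S.conj_mem i)
  isRightTransversal i := ⟨TS.nodup i, TS.mem i, TS.rep i⟩

theorem cSeq_ofSubnormalSeries {g : G} {S : SubnormalSeries G g} (TS : TransversalSystem S)
    (u : ℤ[G]) (i : ℕ) : (ofSubnormalSeries TS).cSeq u i = _root_.cSeq S TS u i := by
  induction i with
  | zero => rfl
  | succ i ih => rw [cSeq_succ, ih]; rfl

theorem cSeq_bassElem_pow [Finite G]
    {C : TransversalChain G} {r : ℕ} (htop : C.N r = ⊤) [IsMulCommutative (C.N 0)] {h x : G}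
    (hh : h ∈ C.N 0) (hx : x ∈ normalizer (C.N 0 : Set G)) {l t : ℕ}
    (hhx : x⁻¹ * h * x = h ^ l) (hcop : (orderOf h).Coprime l)
    (hlt : l ^ t ≡ 1 [MOD orderOf h]) (i : ℕ) :
    C.cSeq (bassElem h l t) r ^ i = C.cSeq (bassElem h (l ^ i) t) r := by
  have hcent (a : ℕ) : IsCentralOver (C.N 0) (bassElem h a t) :=
    isCentralOver_of_mem_subgroupRing (bassElem_mem_subgroupRing hh a t)
  have hdvd (i : ℕ) : (orderOf h : ℤ) ∣ 1 - ((l ^ i : ℕ) : ℤ) ^ t := by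
    have : (l ^ i) ^ t ≡ 1 [MOD orderOf h] := by simpa [← pow_mul, mul_comm i] using hlt.pow i
    simpa using Nat.modEq_iff_dvd.mp this
  induction i with
  | zero => rw [pow_zero, pow_zero, bassElem_eq_one one_pos rfl, cSeq_one]
  | succ i ih =>
    calc C.cSeq (bassElem h l t) r ^ (i + 1)
        = C.cSeq (bassElem h l t) r * C.cSeq (conjBy x (bassElem h (l ^ i) t)) r := by
          rw [pow_succ', ih, cSeq_conjBy_of_mem_normalizer htop (hcent _) hx]
      _ = C.cSeq (bassElem h (l ^ (i + 1)) t) r := by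
          rw [← cSeq_mul (hcent l) ((hcent _).conjBy hx), conjBy_bassElem, hhx,
            bassElem_mul_bassElem_pow hcop (by simpa using hdvd 1) (hdvd i), ← pow_succ']

end TransversalChain

theorem cSeq_bassElem_pow_and_torsion_general {G : Type*} [Group G] [Fintype G]
    (g x : G) (l t k : ℕ) (hl : 0 < l)
    (hconj : x⁻¹ * g * x = g ^ l)
    (hlgcd : Nat.gcd l (orderOf g) = 1)
    (hkgcd : Nat.gcd k (orderOf g) = 1)
    (hlt : l ^ t ≡ 1 [MOD orderOf g])
    (S : SubnormalSeries G g) (TS : TransversalSystem S) :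
    (∀ i : ℕ, 0 < i →
        cSeq S TS (bassElem (g ^ k) l t) S.len ^ i =
          cSeq S TS (bassElem (g ^ k) (l ^ i) t) S.len) ∧
      cSeq S TS (bassElem (g ^ k) l t) S.len ^ t = 1 := by
  let C := TransversalChain.ofSubnormalSeries TS
  have hC0 : C.N 0 = zpowers g := S.bot_eq
  have : IsMulCommutative (C.N 0) := hC0 ▸ inferInstance
  have hord : orderOf (g ^ k) = orderOf g := Nat.Coprime.orderOf_pow (Nat.coprime_comm.mp hkgcd)
  have hx : x ∈ normalizer (C.N 0 : Set G) := by
    refine inv_mem_iff.mp (mem_normalizer_iff_map_conj_eq.mpr ?_)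
    rw [hC0, MonoidHom.map_zpowers, MonoidHom.coe_coe, MulAut.conj_apply, inv_inv, hconj]
    exact zpowers_pow_eq_self_of_coprime (Nat.coprime_comm.mp hlgcd)
  have hhx : x⁻¹ * g ^ k * x = (g ^ k) ^ l := by
    rw [← pow_mul, mul_comm, pow_mul, ← hconj]
    simpa using (conj_pow (a := x⁻¹) (b := g) (i := k)).symm
  have hpow := TransversalChain.cSeq_bassElem_pow S.top_eq (hC0 ▸ pow_mem (mem_zpowers g) k)
    hx hhx (hord ▸ Nat.coprime_comm.mp hlgcd) (hord ▸ hlt)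
  simp only [C, TransversalChain.cSeq_ofSubnormalSeries] at hpow
  refine ⟨fun i _ => hpow i, ?_⟩
  rw [hpow t, bassElem_eq_one (pow_pos hl t) (hord ▸ hlt),
    ← TransversalChain.cSeq_ofSubnormalSeries, TransversalChain.cSeq_one]

theorem cSeq_bassElem_pow_and_torsion {G : Type*} [Group G] [Fintype G]
    (g x : G) (l t k : ℕ) (hl : 0 < l) (ht : 0 < t) (hk : 0 < k)
    (hconj : x⁻¹ * g * x = g ^ l)
    (hlgcd : Nat.gcd l (orderOf g) = 1)
    (hkgcd : Nat.gcd k (orderOf g) = 1)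
    (hlt : l ^ t ≡ 1 [MOD orderOf g])
    (S : SubnormalSeries G g) (TS : TransversalSystem S) :
    (∀ i : ℕ, 0 < i →
        cSeq S TS (bassElem (g ^ k) l t) S.len ^ i =
          cSeq S TS (bassElem (g ^ k) (l ^ i) t) S.len) ∧
      cSeq S TS (bassElem (g ^ k) l t) S.len ^ t = 1 :=
  cSeq_bassElem_pow_and_torsion_general g x l t k hl hconj hlgcd hkgcd hlt S TS
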